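/- Let X₁, X₂ be independent with X_i ~ Gamma(α, θ_i), θ_i > 0, α > 0. Let Z₂ = max{X₁, X₂}, H_S(θ) = ln θ₁ · 1{X₁ ≥ X₂} + ln θ₂ · 1{X₁ < X₂}, and μ = max{θ₁,θ₂}/min{θ₁,θ₂}. Then E[ln Z₂ − H_S(θ)] = ∫₀^∞ ln(z) G_α(z/μ) g_α(z) dz + ∫₀^∞ ln(z) G_α(μz) g_α(z) dz, where G_α and g_α are the cdf and pdf of Gamma(α,1). -/

import Mathlib

/-!
The variables `Yᵢ = Xᵢ / θᵢ` are independent Gamma(α, 1), and on `{X₂ ≤ X₁}` (resp. its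
complement) the integrand `ln Z₂ − H_S` is `ln Y₁` (resp. `ln Y₂`). Since
`X₂ ≤ X₁ ↔ Y₂ ≤ (θ₁/θ₂) Y₁`, Fubini turns `E[ln Y₁; X₂ ≤ X₁]` into
`∫ ln y · G_α((θ₁/θ₂) y) g_α(y) dy` and, symmetrically, `E[ln Y₂; X₁ < X₂]` into the same integral
with `θ₂/θ₁`. One of the two ratios is `μ`, the other `1/μ`.
-/

open MeasureTheory ProbabilityTheory

/-- CDF of the Gamma(α,1) distribution. -/
noncomputable def gammaCDF (α x : ℝ) : ℝ := ∫ t in Set.Iic x, gammaPDFReal α 1 t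

open Set Real

theorem abs_log_le_rpow_add_rpow_neg_div {x ε : ℝ} (hx : 0 < x) (hε : 0 < ε) :
    |log x| ≤ (x ^ ε + x ^ (-ε)) / ε := by
  have hle := log_le_rpow_div hx.le hε
  have hge : -log x ≤ x ^ (-ε) / ε := by
    simpa [log_inv, inv_rpow hx.le, rpow_neg hx.le] using log_le_rpow_div (inv_pos.2 hx).le hε
  have : 0 ≤ x ^ ε / ε := by positivity
  have : 0 ≤ x ^ (-ε) / ε := by positivity
  rw [add_div]
  exact abs_le'.2 ⟨by linarith, by linarith⟩

theorem integrableOn_log_mul_rpow_mul_exp_neg {s : ℝ} (hs : 0 < s) :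
    IntegrableOn (fun x => log x * (x ^ (s - 1) * exp (-x))) (Ioi 0) := by
  obtain ⟨ε, hε, hεs⟩ : ∃ ε, 0 < ε ∧ ε < s := ⟨s / 2, by positivity, by linarith⟩
  have hdom : IntegrableOn
      (fun x => ε⁻¹ * (exp (-x) * x ^ (s + ε - 1) + exp (-x) * x ^ (s - ε - 1))) (Ioi 0) :=
    ((GammaIntegral_convergent (by linarith)).add
      (GammaIntegral_convergent (by linarith))).const_mul _
  refine hdom.mono' (by fun_prop) ?_
  filter_upwards [ae_restrict_mem measurableSet_Ioi] with x (hx : 0 < x)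
  have h₁ : x ^ ε * x ^ (s - 1) = x ^ (s + ε - 1) := by rw [← rpow_add hx]; ring_nf
  have h₂ : x ^ (-ε) * x ^ (s - 1) = x ^ (s - ε - 1) := by rw [← rpow_add hx]; ring_nf
  calc ‖log x * (x ^ (s - 1) * exp (-x))‖ = |log x| * (x ^ (s - 1) * exp (-x)) := by
        rw [norm_mul, norm_eq_abs, norm_of_nonneg (by positivity)]
    _ ≤ (x ^ ε + x ^ (-ε)) / ε * (x ^ (s - 1) * exp (-x)) := by
        gcongr; exact abs_log_le_rpow_add_rpow_neg_div hx hε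
    _ = _ := by rw [← h₁, ← h₂]; ring

section GammaMeasure

variable {a r : ℝ}

theorem measurable_gammaPDF (a r : ℝ) : Measurable (gammaPDF a r) :=
  (measurable_gammaPDFReal a r).ennreal_ofReal

instance (a r : ℝ) : NullSingletonClass (gammaMeasure a r) :=
  inferInstanceAs (NullSingletonClass (volume.withDensity _))

theorem gammaMeasure_Iic_zero (a r : ℝ) : gammaMeasure a r (Iic 0) = 0 := by
  rw [gammaMeasure, withDensity_apply _ measurableSet_Iic, ← setLIntegral_congr Iio_ae_eq_Iic]
  exact lintegral_gammaPDF_of_nonpos le_rfl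

theorem ae_pos_gammaMeasure (a r : ℝ) : ∀ᵐ x ∂gammaMeasure a r, 0 < x := by
  rw [ae_iff]
  exact measure_mono_null (fun x (hx : ¬0 < x) => not_lt.1 hx) (gammaMeasure_Iic_zero a r)

theorem integral_gammaMeasure (ha : 0 < a) (hr : 0 < r) (g : ℝ → ℝ) :
    ∫ x, g x ∂gammaMeasure a r = ∫ x in Ioi 0, g x * gammaPDFReal a r x := by
  have hsupp : ∀ x ∉ Ici (0 : ℝ), (gammaPDF a r x).toReal • g x = 0 := fun x hx => by
    simp [gammaPDF_of_neg (not_le.1 hx)]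
  rw [gammaMeasure, integral_withDensity_eq_integral_toReal_smul
      (measurable_gammaPDF a r) (ae_of_all _ fun _ => ENNReal.ofReal_lt_top),
    ← setIntegral_eq_integral_of_forall_compl_eq_zero hsupp, integral_Ici_eq_integral_Ioi]
  refine setIntegral_congr_fun measurableSet_Ioi fun x _ => ?_
  rw [gammaPDF, ENNReal.toReal_ofReal (gammaPDFReal_nonneg ha hr x), smul_eq_mul, mul_comm]

theorem integrable_gammaMeasure_iff (ha : 0 < a) (hr : 0 < r) {g : ℝ → ℝ} :
    Integrable g (gammaMeasure a r) ↔
      IntegrableOn (fun x => g x * gammaPDFReal a r x) (Ioi 0) := by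
  have hsupp : Function.support (fun x => g x * gammaPDFReal a r x) ⊆ Ici 0 := fun x hx => by
    by_contra h
    simp [gammaPDFReal, show ¬0 ≤ x from h] at hx
  rw [gammaMeasure, integrable_withDensity_iff (measurable_gammaPDF a r)
      (ae_of_all _ fun _ => ENNReal.ofReal_lt_top), ← integrableOn_Ici_iff_integrableOn_Ioi,
    integrableOn_iff_integrable_of_support_subset hsupp]
  simp only [gammaPDF, ENNReal.toReal_ofReal (gammaPDFReal_nonneg ha hr _)]

theorem integrable_log_gammaMeasure (ha : 0 < a) : Integrable log (gammaMeasure a 1) := by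
  rw [integrable_gammaMeasure_iff ha one_pos]
  refine IntegrableOn.congr_fun ((integrableOn_log_mul_rpow_mul_exp_neg ha).const_mul (Gamma a)⁻¹)
    (fun x hx => ?_) measurableSet_Ioi
  simp only [gammaPDFReal, if_pos (mem_Ioi.1 hx).le, one_rpow, one_mul]
  ring

theorem measureReal_gammaMeasure_Iic (ha : 0 < a) (x : ℝ) :
    (gammaMeasure a 1).real (Iic x) = gammaCDF a x := by
  have := isProbabilityMeasure_gammaMeasure ha one_pos
  rw [← cdf_eq_real, cdf_gammaMeasure_eq_integral ha one_pos, gammaCDF]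

theorem const_mul_gammaPDFReal_const_mul (hr : 0 ≤ r) {c : ℝ} (hc : 0 < c) (x : ℝ) :
    c * gammaPDFReal a (r / c) (c * x) = gammaPDFReal a r x := by
  rcases lt_or_ge x 0 with hx | hx
  · simp [gammaPDFReal, hx.not_ge, mul_neg_of_pos_of_neg hc hx |>.not_ge]
  have hca : c * c ^ (a - 1) = c ^ a := by
    rw [rpow_sub_one hc.ne']; field_simp
  simp only [gammaPDFReal, if_pos hx, if_pos (mul_nonneg hc.le hx), div_rpow hr hc.le,
    mul_rpow hc.le hx]
  field_simp
  rw [← hca]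
  ring

theorem map_const_mul_gammaMeasure (hr : 0 ≤ r) {c : ℝ} (hc : 0 < c) :
    (gammaMeasure a r).map (c * ·) = gammaMeasure a (r / c) := by
  have hpdf : ∀ x, gammaPDF a r x = ENNReal.ofReal c * gammaPDF a (r / c) (c * x) := fun x => by
    rw [gammaPDF, gammaPDF, ← ENNReal.ofReal_mul hc.le, const_mul_gammaPDFReal_const_mul hr hc]
  ext s hs
  rw [Measure.map_apply (measurable_const_mul c) hs, gammaMeasure, gammaMeasure,
    withDensity_apply _ (measurable_const_mul c hs), withDensity_apply _ hs]
  simp only [hpdf]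
  rw [lintegral_const_mul (f := fun x => gammaPDF a (r / c) (c * x)) _
      ((measurable_gammaPDF _ _).comp (measurable_const_mul c)),
    ← setLIntegral_map hs (measurable_gammaPDF _ _) (measurable_const_mul c),
    Real.map_volume_mul_left hc.ne', Measure.restrict_smul, lintegral_smul_measure, smul_eq_mul,
    ← mul_assoc, abs_of_pos (inv_pos.2 hc), ← ENNReal.ofReal_mul hc.le, mul_inv_cancel₀ hc.ne',
    ENNReal.ofReal_one, one_mul]

end GammaMeasure

section Fubini

variable {X Y E : Type*} [MeasurableSpace X] [MeasurableSpace Y] [NormedAddCommGroup E]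
  [NormedSpace ℝ E] [CompleteSpace E] {ν₁ : Measure X} {ν₂ : Measure Y} [SFinite ν₁]
  [IsFiniteMeasure ν₂]

theorem integral_prod_indicator_comp_fst {s : Set (X × Y)} (hs : MeasurableSet s) {f : X → E}
    (hf : Integrable f ν₁) :
    ∫ p, s.indicator (fun p => f p.1) p ∂ν₁.prod ν₂ =
      ∫ x, ν₂.real (Prod.mk x ⁻¹' s) • f x ∂ν₁ := by
  rw [integral_prod _ ((hf.comp_fst ν₂).indicator hs)]
  refine integral_congr_ae (ae_of_all _ fun x => ?_)
  dsimp only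
  rw [← integral_indicator_const _ (measurable_prodMk_left hs)]
  rfl

end Fubini

theorem integral_prod_self_ite_mul_le_mul {ν : Measure ℝ} [IsFiniteMeasure ν]
    [NullSingletonClass ν] {f : ℝ → ℝ} (hf : Integrable f ν) {a b : ℝ} (ha : 0 < a) (hb : 0 < b) :
    ∫ p, (if b * p.2 ≤ a * p.1 then f p.1 else f p.2) ∂ν.prod ν =
      ∫ x, f x * ν.real (Iic (a / b * x)) ∂ν + ∫ x, f x * ν.real (Iic (b / a * x)) ∂ν := by
  set S := {p : ℝ × ℝ | b * p.2 ≤ a * p.1}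
  have hS : MeasurableSet S := measurableSet_le (by fun_prop) (by fun_prop)
  -- The complementary event is integrated after swapping coordinates, which preserves `ν.prod ν`.
  have hsplit : ∀ p : ℝ × ℝ, (if b * p.2 ≤ a * p.1 then f p.1 else f p.2) =
      S.indicator (fun p => f p.1) p + (Prod.swap ⁻¹' Sᶜ).indicator (fun p => f p.1) p.swap :=
    fun p => by by_cases h : b * p.2 ≤ a * p.1 <;> simp [S, h]
  have hsecS : ∀ x, Prod.mk x ⁻¹' S = Iic (a / b * x) := fun x => by
    ext y; simp [S, div_mul_eq_mul_div, le_div_iff₀ hb, mul_comm y]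
  have hsecSwap : ∀ x, Prod.mk x ⁻¹' (Prod.swap ⁻¹' Sᶜ) = Iio (b / a * x) := fun x => by
    ext y; simp [S, div_mul_eq_mul_div, lt_div_iff₀ ha, mul_comm y]
  simp only [hsplit]
  rw [integral_add ((hf.comp_fst ν).indicator hS) ?_,
    integral_prod_swap (fun p => (Prod.swap ⁻¹' Sᶜ).indicator (fun p => f p.1) p),
    integral_prod_indicator_comp_fst hS hf,
    integral_prod_indicator_comp_fst (measurable_swap hS.compl) hf]
  · simp only [hsecS, hsecSwap, measureReal_congr Iio_ae_eq_Iic, smul_eq_mul, mul_comm (f _)]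
  · exact (hf.comp_snd ν).indicator hS.compl

theorem log_max_mul_sub_ite_log {θ₁ θ₂ y₁ y₂ : ℝ} (hθ₁ : 0 < θ₁) (hθ₂ : 0 < θ₂) (hy₁ : 0 < y₁)
    (hy₂ : 0 < y₂) :
    log (max (θ₁ * y₁) (θ₂ * y₂)) - (if θ₂ * y₂ ≤ θ₁ * y₁ then log θ₁ else log θ₂) =
      if θ₂ * y₂ ≤ θ₁ * y₁ then log y₁ else log y₂ := by
  split_ifs with h
  · rw [max_eq_left h, log_mul hθ₁.ne' hy₁.ne']; ring
  · rw [max_eq_right (not_le.1 h).le, log_mul hθ₂.ne' hy₂.ne']; ring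

theorem div_eq_max_div_min_or_inv (a b : ℝ) :
    a / b = max a b / min a b ∨ a / b = (max a b / min a b)⁻¹ := by
  rcases le_total b a with h | h
  · left; rw [max_eq_left h, min_eq_right h]
  · right; rw [max_eq_right h, min_eq_left h, inv_div]

theorem map_inv_mul_eq_gammaMeasure_one {Ω : Type*} [MeasurableSpace Ω] {μ : Measure Ω}
    {X : Ω → ℝ} (hX : Measurable X) {a θ : ℝ} (hθ : 0 < θ)
    (h : μ.map X = gammaMeasure a (1 / θ)) :
    μ.map (fun ω => θ⁻¹ * X ω) = gammaMeasure a 1 := by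
  rw [show (fun ω => θ⁻¹ * X ω) = (θ⁻¹ * ·) ∘ X from rfl,
    ← Measure.map_map (measurable_const_mul _) hX, h,
    map_const_mul_gammaMeasure (by positivity) (inv_pos.2 hθ), one_div, inv_div_inv,
    div_self hθ.ne']

theorem map_inv_mul_prod_eq_gammaMeasure_prod {Ω : Type*} [MeasurableSpace Ω] {μ : Measure Ω}
    [IsFiniteMeasure μ] {a θ₁ θ₂ : ℝ} (hθ₁ : 0 < θ₁) (hθ₂ : 0 < θ₂) {X₁ X₂ : Ω → ℝ}
    (hm₁ : Measurable X₁) (hm₂ : Measurable X₂) (h₁ : μ.map X₁ = gammaMeasure a (1 / θ₁))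
    (h₂ : μ.map X₂ = gammaMeasure a (1 / θ₂)) (hind : IndepFun X₁ X₂ μ) :
    μ.map (fun ω => (θ₁⁻¹ * X₁ ω, θ₂⁻¹ * X₂ ω)) = (gammaMeasure a 1).prod (gammaMeasure a 1) := by
  rw [(indepFun_iff_map_prod_eq_prod_map_map (hm₁.const_mul _).aemeasurable
      (hm₂.const_mul _).aemeasurable).1
      (hind.comp (measurable_const_mul _) (measurable_const_mul _)),
    map_inv_mul_eq_gammaMeasure_one hm₁ hθ₁ h₁, map_inv_mul_eq_gammaMeasure_one hm₂ hθ₂ h₂]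

theorem expectation_log_max_sub_selected {Ω : Type*} [MeasurableSpace Ω] (μ : Measure Ω)
    [IsProbabilityMeasure μ] (α θ₁ θ₂ : ℝ) (hα : 0 < α) (hθ₁ : 0 < θ₁) (hθ₂ : 0 < θ₂)
    (X₁ X₂ : Ω → ℝ) (hm₁ : Measurable X₁) (hm₂ : Measurable X₂)
    (h₁ : Measure.map X₁ μ = gammaMeasure α (1 / θ₁))
    (h₂ : Measure.map X₂ μ = gammaMeasure α (1 / θ₂))
    (hind : IndepFun X₁ X₂ μ) (μr : ℝ) (hμr : μr = max θ₁ θ₂ / min θ₁ θ₂) :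
    ∫ ω, (Real.log (max (X₁ ω) (X₂ ω)) -
        (if X₂ ω ≤ X₁ ω then Real.log θ₁ else Real.log θ₂)) ∂μ =
      (∫ z in Set.Ioi (0:ℝ), Real.log z * gammaCDF α (z / μr) * gammaPDFReal α 1 z) +
        ∫ z in Set.Ioi (0:ℝ), Real.log z * gammaCDF α (μr * z) * gammaPDFReal α 1 z := by
  have := isProbabilityMeasure_gammaMeasure hα one_pos
  set γ := gammaMeasure α 1
  set F : ℝ × ℝ → ℝ := fun p => if θ₂ * p.2 ≤ θ₁ * p.1 then log p.1 else log p.2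
  have hX₁ : ∀ᵐ ω ∂μ, 0 < X₁ ω := ae_of_ae_map hm₁.aemeasurable (h₁ ▸ ae_pos_gammaMeasure _ _)
  have hX₂ : ∀ᵐ ω ∂μ, 0 < X₂ ω := ae_of_ae_map hm₂.aemeasurable (h₂ ▸ ae_pos_gammaMeasure _ _)
  have hF : (fun ω => log (max (X₁ ω) (X₂ ω)) - (if X₂ ω ≤ X₁ ω then log θ₁ else log θ₂)) =ᵐ[μ]
      fun ω => F (θ₁⁻¹ * X₁ ω, θ₂⁻¹ * X₂ ω) := by
    filter_upwards [hX₁, hX₂] with ω hω₁ hω₂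
    simpa only [F, mul_inv_cancel_left₀ hθ₁.ne', mul_inv_cancel_left₀ hθ₂.ne'] using
      log_max_mul_sub_ite_log hθ₁ hθ₂ (y₁ := θ₁⁻¹ * X₁ ω) (y₂ := θ₂⁻¹ * X₂ ω) (by positivity)
        (by positivity)
  have hmap : ∫ ω, F (θ₁⁻¹ * X₁ ω, θ₂⁻¹ * X₂ ω) ∂μ = ∫ p, F p ∂γ.prod γ := by
    have hFm : Measurable F :=
      Measurable.ite (measurableSet_le (by fun_prop) (by fun_prop)) (by fun_prop) (by fun_prop)
    rw [← map_inv_mul_prod_eq_gammaMeasure_prod hθ₁ hθ₂ hm₁ hm₂ h₁ h₂ hind,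
      integral_map (by fun_prop) hFm.aestronglyMeasurable]
  rw [integral_congr_ae hF, hmap,
    integral_prod_self_ite_mul_le_mul (integrable_log_gammaMeasure hα) hθ₁ hθ₂]
  simp only [measureReal_gammaMeasure_Iic hα, integral_gammaMeasure hα one_pos,
    div_eq_inv_mul _ μr, ← inv_div θ₁ θ₂]
  rcases div_eq_max_div_min_or_inv θ₁ θ₂ with h | h <;> rw [h, ← hμr]
  · exact add_comm _ _
  · rw [inv_inv]
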